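/- arXiv:2410.23819 — 3 statements merged into one kernel-verified Lean document; each statement's English description precedes it below -/
import Mathlib

section
/- Let A ∈ ℝ^{m×r} and B ∈ ℝ^{n×r} be real matrices satisfying AᵀA = BᵀB. Then the nuclear norm of ABᵀ equals (‖A‖_F² + ‖B‖_F²)/2. -/
open Matrix

/-- Squared Frobenius norm of a real matrix. -/
noncomputable def frobSq {m n : ℕ} (A : Matrix (Fin m) (Fin n) ℝ) : ℝ :=
  ∑ i, ∑ j, (A i j) ^ 2

/-- Frobenius norm. -/
noncomputable def frobNorm {m n : ℕ} (A : Matrix (Fin m) (Fin n) ℝ) : ℝ :=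
  Real.sqrt (frobSq A)

lemma wwT_posSemidef {m n : ℕ} (W : Matrix (Fin m) (Fin n) ℝ) :
    (W * Wᵀ).PosSemidef := by
  simpa [Matrix.conjTranspose_eq_transpose_of_trivial] using
    W.posSemidef_self_mul_conjTranspose

/-- Nuclear norm: trace of the PSD square root of `W * Wᵀ`. -/
noncomputable def nuclearNorm {m n : ℕ} (W : Matrix (Fin m) (Fin n) ℝ) : ℝ :=
  ((wwT_posSemidef W).1.eigenvectorUnitary.1 *
    diagonal ((RCLike.ofReal : ℝ → ℝ) ∘ (√·) ∘ (wwT_posSemidef W).1.eigenvalues) *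
    (star (wwT_posSemidef W).1.eigenvectorUnitary : Matrix (Fin m) (Fin m) ℝ)).trace

/-!
Balance gives `(A Aᵀ)² = A (Aᵀ A) Aᵀ = A (Bᵀ B) Aᵀ = (A Bᵀ)(A Bᵀ)ᵀ`, so the positive semidefinite
matrix `A Aᵀ` is the square root defining `‖A Bᵀ‖_*`, whose trace is `‖A‖_F²`. Taking traces of
`Aᵀ A = Bᵀ B` gives `‖A‖_F² = ‖B‖_F²`.
-/

open scoped MatrixOrder

lemma frobSq_eq_trace_mul_transpose {m n : ℕ} (A : Matrix (Fin m) (Fin n) ℝ) :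
    frobSq A = (A * Aᵀ).trace := by
  simp [frobSq, Matrix.trace, Matrix.mul_apply, sq]

lemma frobSq_eq_trace_transpose_mul {m n : ℕ} (A : Matrix (Fin m) (Fin n) ℝ) :
    frobSq A = (Aᵀ * A).trace := by
  rw [frobSq, Finset.sum_comm]
  simp [Matrix.trace, Matrix.mul_apply, sq]

lemma nuclearNorm_eq_trace_sqrt {m n : ℕ} (W : Matrix (Fin m) (Fin n) ℝ) :
    nuclearNorm W = (CFC.sqrt (W * Wᵀ)).trace := by
  have hW := wwT_posSemidef W
  have hcfc := hW.1.cfc_eq Real.sqrt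
  rw [IsHermitian.cfc, Unitary.conjStarAlgAut_apply] at hcfc
  rw [nuclearNorm, ← hcfc, ← cfcₙ_eq_cfc,
    CFC.sqrt_eq_real_sqrt _ (Matrix.nonneg_iff_posSemidef.mpr hW)]

lemma nuclearNorm_eq_trace_of_mul_self_eq {m n : ℕ} (W : Matrix (Fin m) (Fin n) ℝ)
    {P : Matrix (Fin m) (Fin m) ℝ} (hP : P.PosSemidef) (hsq : P * P = W * Wᵀ) :
    nuclearNorm W = P.trace := by
  rw [nuclearNorm_eq_trace_sqrt, CFC.sqrt_unique hsq (Matrix.nonneg_iff_posSemidef.mpr hP)]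

lemma mul_transpose_mul_self_of_balanced {R ι κ ρ : Type*} [CommSemiring R] [Fintype ι]
    [Fintype κ] [Fintype ρ] {A : Matrix ι ρ R} {B : Matrix κ ρ R} (hbal : Aᵀ * A = Bᵀ * B) :
    (A * Aᵀ) * (A * Aᵀ) = (A * Bᵀ) * (A * Bᵀ)ᵀ :=
  calc A * Aᵀ * (A * Aᵀ) = A * (Aᵀ * A) * Aᵀ := by simp only [Matrix.mul_assoc]
    _ = A * (Bᵀ * B) * Aᵀ := by rw [hbal]
    _ = A * Bᵀ * (A * Bᵀ)ᵀ := by simp only [transpose_mul, transpose_transpose, Matrix.mul_assoc]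

/-- if `AᵀA = BᵀB` then `‖ABᵀ‖_* = (‖A‖_F² + ‖B‖_F²)/2`. -/
theorem nuclearNorm_mul_transpose_of_balanced {m n r : ℕ}
    (A : Matrix (Fin m) (Fin r) ℝ) (B : Matrix (Fin n) (Fin r) ℝ)
    (hbal : Aᵀ * A = Bᵀ * B) :
    nuclearNorm (A * Bᵀ) = (frobSq A + frobSq B) / 2 := by
  have hnuc : nuclearNorm (A * Bᵀ) = frobSq A := by
    rw [nuclearNorm_eq_trace_of_mul_self_eq _ (wwT_posSemidef A)
      (mul_transpose_mul_self_of_balanced hbal), frobSq_eq_trace_mul_transpose]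
  have hfrob : frobSq A = frobSq B := by
    rw [frobSq_eq_trace_transpose_mul, frobSq_eq_trace_transpose_mul B, hbal]
  rw [hnuc, ← hfrob]
  ring
end

section
/- Let A ∈ ℝ^{m×r} and B ∈ ℝ^{n×r} satisfy AᵀA = BᵀB. Then there exist orthogonal matrices U ∈ O(m), V ∈ O(n), O ∈ O(r), and a diagonal matrix S with nonnegative entries such that A = U Σ Oᵀ and B = V Σ Oᵀ, where Σ is the m×r (resp. n×r) matrix with √S in its top r×r block and zeros below, and U S Vᵀ restricted appropriately gives an SVD of ABᵀ. -/
/-!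
Diagonalize the common Gram matrix: `Oᵀ (AᵀA) O = S` with `O` orthogonal and `S` diagonal. The
columns of `A O` are then pairwise orthogonal with squared norms `S i i`, so normalizing the nonzero
ones and completing them to an orthonormal basis of `ℝᵐ` gives an orthogonal `U` with
`A O = U √S`; the same `S` serves for `B O` because `BᵀB = AᵀA`. Finally
`A Bᵀ = U √S (√S)ᵀ Vᵀ` and `√S (√S)ᵀ` is `S` padded with zeros.
-/

open Matrix

/-- The `m × r` matrix with the entrywise square roots of the diagonal of `S`
in its top `r × r` block and zeros below. -/
noncomputable def padSqrt (m r : ℕ) (S : Matrix (Fin r) (Fin r) ℝ) :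
    Matrix (Fin m) (Fin r) ℝ :=
  Matrix.of fun i j => if (i : ℕ) = (j : ℕ) then Real.sqrt (S j j) else 0

/-- The `m × n` rectangular-diagonal matrix whose diagonal starts with the diagonal
of the `r × r` matrix `S` and is padded with zeros. -/
noncomputable def padDiag (m n r : ℕ) (S : Matrix (Fin r) (Fin r) ℝ) :
    Matrix (Fin m) (Fin n) ℝ :=
  Matrix.of fun i j =>
    if h : (i : ℕ) = (j : ℕ) ∧ (i : ℕ) < r then S ⟨i, h.2⟩ ⟨i, h.2⟩ else 0

section OrthogonalFamily

open Module

variable {𝕜 E ι : Type*} [RCLike 𝕜] [NormedAddCommGroup E] [InnerProductSpace 𝕜 E]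
  [FiniteDimensional 𝕜 E] [Fintype ι]

lemma exists_orthonormalBasis_norm_smul_eq_of_orthogonal
    (h : finrank 𝕜 E = Fintype.card ι) {f : ι → E}
    (hf : Pairwise fun i j => inner 𝕜 (f i) (f j) = 0) :
    ∃ b : OrthonormalBasis ι 𝕜 E, ∀ i, (‖f i‖ : 𝕜) • b i = f i := by
  set s : Set ι := {i | f i ≠ 0}
  set v : ι → E := fun i => (‖f i‖⁻¹ : 𝕜) • f i
  have hv : Orthonormal 𝕜 (s.domRestrict v) :=
    ⟨fun i => norm_smul_inv_norm i.2, fun i j hij => by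
      change inner 𝕜 (v i) (v j) = 0
      rw [inner_smul_left, inner_smul_right, hf (Subtype.coe_injective.ne hij), mul_zero, mul_zero]⟩
  obtain ⟨b, hb⟩ := hv.exists_orthonormalBasis_extension_of_card_eq h
  refine ⟨b, fun i => ?_⟩
  by_cases hi : f i = 0
  · simp [hi]
  · rw [hb i hi, smul_smul, mul_inv_cancel₀ (by simpa using hi), one_smul]

lemma exists_orthonormalBasis_norm_smul_comp_eq_of_orthogonal {κ : Type*}
    (h : finrank 𝕜 E = Fintype.card ι) {c : κ → E}
    (hc : Pairwise fun j k => inner 𝕜 (c j) (c k) = 0) {e : κ → ι} (he : e.Injective) :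
    ∃ b : OrthonormalBasis ι 𝕜 E, ∀ j, (‖c j‖ : 𝕜) • b (e j) = c j := by
  classical
  set f : ι → E := Function.extend e c fun _ => 0
  have hfe (j : κ) : f (e j) = c j := he.extend_apply c _ j
  have hf0 (i : ι) (hi : i ∉ Set.range e) : f i = 0 :=
    Function.extend_apply' c _ i fun ⟨j, hj⟩ => hi ⟨j, hj⟩
  have hf : Pairwise fun i i' => inner 𝕜 (f i) (f i') = 0 := by
    intro i i' hii'
    by_cases hi : i ∈ Set.range e
    · by_cases hi' : i' ∈ Set.range e
      · obtain ⟨j, rfl⟩ := hi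
        obtain ⟨j', rfl⟩ := hi'
        rw [hfe, hfe]
        exact hc fun hjj' => hii' (congrArg e hjj')
      · simp [hf0 i' hi']
    · simp [hf0 i hi]
  obtain ⟨b, hb⟩ := exists_orthonormalBasis_norm_smul_eq_of_orthogonal h hf
  exact ⟨b, fun j => by simpa only [hfe] using hb (e j)⟩

end OrthogonalFamily

namespace Matrix

variable {ι κ : Type*} [Fintype ι]

lemma posSemidef_transpose_mul_self [Fintype κ] (A : Matrix ι κ ℝ) : (Aᵀ * A).PosSemidef := by
  simpa only [conjTranspose_eq_transpose_of_trivial] using posSemidef_conjTranspose_mul_self A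

lemma IsHermitian.exists_orthogonal_isDiag {G : Matrix ι ι ℝ} [DecidableEq ι]
    (hG : G.IsHermitian) : ∃ O ∈ orthogonalGroup ι ℝ, (Oᵀ * G * O).IsDiag := by
  refine ⟨hG.eigenvectorUnitary, hG.eigenvectorUnitary.2, ?_⟩
  have h := hG.conjStarAlgAut_star_eigenvectorUnitary
  simp only [Unitary.conjStarAlgAut_apply, Unitary.coe_star, star_eq_conjTranspose,
    conjTranspose_eq_transpose_of_trivial, transpose_transpose] at h
  rw [h]
  exact isDiag_diagonal _

lemma inner_toLp_transpose (C : Matrix ι κ ℝ) (j k : κ) :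
    inner ℝ (WithLp.toLp 2 (Cᵀ j)) (WithLp.toLp 2 (Cᵀ k)) = (Cᵀ * C) j k := by
  simp [PiLp.inner_apply, mul_apply, mul_comm]

lemma norm_toLp_transpose (C : Matrix ι κ ℝ) (j : κ) :
    ‖WithLp.toLp 2 (Cᵀ j)‖ = √((Cᵀ * C) j j) := by
  rw [norm_eq_sqrt_real_inner, inner_toLp_transpose]

end Matrix

lemma mul_padSqrt_apply {ι : Type*} {m r : ℕ} (hm : r ≤ m) (M : Matrix ι (Fin m) ℝ)
    (S : Matrix (Fin r) (Fin r) ℝ) (p : ι) (j : Fin r) :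
    (M * padSqrt m r S) p j = M p (Fin.castLE hm j) * √(S j j) := by
  rw [mul_apply, Finset.sum_eq_single (Fin.castLE hm j)]
  · simp [padSqrt]
  · intro k _ hk
    have hkj : (k : ℕ) ≠ j := fun h => hk (Fin.ext h)
    simp [padSqrt, hkj]
  · simp

lemma exists_orthogonal_mul_padSqrt {m r : ℕ} (hm : r ≤ m) (C : Matrix (Fin m) (Fin r) ℝ)
    (hC : (Cᵀ * C).IsDiag) :
    ∃ U : Matrix (Fin m) (Fin m) ℝ, Uᵀ * U = 1 ∧ C = U * padSqrt m r (Cᵀ * C) := by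
  have hc : Pairwise fun j k => inner ℝ (WithLp.toLp 2 (Cᵀ j)) (WithLp.toLp 2 (Cᵀ k)) = 0 :=
    fun j k hjk => (inner_toLp_transpose C j k).trans (hC hjk)
  obtain ⟨b, hb⟩ := exists_orthonormalBasis_norm_smul_comp_eq_of_orthogonal
    (E := EuclideanSpace ℝ (Fin m)) (by simp) hc (Fin.castLE_injective hm)
  refine ⟨(EuclideanSpace.basisFun (Fin m) ℝ).toBasis.toMatrix b, (mem_orthogonalGroup_iff' _ _).mp
    (OrthonormalBasis.toMatrix_orthonormalBasis_mem_orthogonal _ _), ?_⟩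
  ext p j
  have := congrArg (· p) (hb j)
  simp only [norm_toLp_transpose] at this
  rw [mul_padSqrt_apply hm, Module.Basis.toMatrix_apply]
  simpa [mul_comm] using this.symm

lemma padSqrt_mul_padSqrt_transpose {m n r : ℕ} (S : Matrix (Fin r) (Fin r) ℝ)
    (hS : ∀ i, 0 ≤ S i i) :
    padSqrt m r S * (padSqrt n r S)ᵀ = padDiag m n r S := by
  ext i j
  simp only [mul_apply, padSqrt, padDiag, of_apply, transpose_apply]
  by_cases hi : (i : ℕ) < r
  · rw [Finset.sum_eq_single ⟨i, hi⟩ (fun k _ hk => by rw [if_neg fun h => hk (Fin.ext h.symm),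
      zero_mul]) (by simp)]
    by_cases hij : (i : ℕ) = j
    · rw [dif_pos ⟨hij, hi⟩, if_pos rfl, if_pos hij.symm]
      exact Real.mul_self_sqrt (hS _)
    · simp [hij, Ne.symm hij]
  · rw [dif_neg fun h => hi h.2]
    exact Finset.sum_eq_zero fun k _ => by
      rw [if_neg fun h : (i : ℕ) = k => hi (h ▸ k.2), zero_mul]

/-- a balanced pair `AᵀA = BᵀB` (with `m, n ≥ r`) factors as
`A = U Σ Oᵀ`, `B = V Σ Oᵀ` with `U, V, O` orthogonal, `S` diagonal nonnegative,
and `ABᵀ = U (pad S) Vᵀ` is an SVD of `ABᵀ`. -/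
theorem balanced_factorization {m n r : ℕ} (hm : r ≤ m) (hn : r ≤ n)
    (A : Matrix (Fin m) (Fin r) ℝ) (B : Matrix (Fin n) (Fin r) ℝ)
    (hbal : Aᵀ * A = Bᵀ * B) :
    ∃ (U : Matrix (Fin m) (Fin m) ℝ) (V : Matrix (Fin n) (Fin n) ℝ)
      (O : Matrix (Fin r) (Fin r) ℝ) (S : Matrix (Fin r) (Fin r) ℝ),
      Uᵀ * U = 1 ∧ Vᵀ * V = 1 ∧ Oᵀ * O = 1 ∧
      (∀ i j, i ≠ j → S i j = 0) ∧ (∀ i, 0 ≤ S i i) ∧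
      A = U * padSqrt m r S * Oᵀ ∧
      B = V * padSqrt n r S * Oᵀ ∧
      A * Bᵀ = U * padDiag m n r S * Vᵀ := by
  obtain ⟨O, hO, hdiag⟩ := (posSemidef_transpose_mul_self A).isHermitian.exists_orthogonal_isDiag
  have hOO : O * Oᵀ = 1 := (mem_orthogonalGroup_iff _ _).mp hO
  have hOO' : Oᵀ * O = 1 := (mem_orthogonalGroup_iff' _ _).mp hO
  have hconj {k : ℕ} (M : Matrix (Fin k) (Fin r) ℝ) (hM : Mᵀ * M = Aᵀ * A) :
      (M * O)ᵀ * (M * O) = Oᵀ * (Aᵀ * A) * O := by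
    simp only [transpose_mul, ← hM, Matrix.mul_assoc]
  set S := (A * O)ᵀ * (A * O)
  have hSA : S = Oᵀ * (Aᵀ * A) * O := hconj A rfl
  have hSB : (B * O)ᵀ * (B * O) = S := (hconj B hbal.symm).trans hSA.symm
  have hSdiag : S.IsDiag := hSA ▸ hdiag
  obtain ⟨U, hU, hAO⟩ := exists_orthogonal_mul_padSqrt hm (A * O) hSdiag
  obtain ⟨V, hV, hBO⟩ := exists_orthogonal_mul_padSqrt hn (B * O) (hSB ▸ hSdiag)
  rw [hSB] at hBO
  have hA : A = U * padSqrt m r S * Oᵀ := by rw [← hAO, Matrix.mul_assoc, hOO, Matrix.mul_one]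
  have hB : B = V * padSqrt n r S * Oᵀ := by rw [← hBO, Matrix.mul_assoc, hOO, Matrix.mul_one]
  have hS (i : Fin r) : 0 ≤ S i i := (posSemidef_transpose_mul_self (A * O)).diag_nonneg
  refine ⟨U, V, O, S, hU, hV, hOO', fun i j hij => hSdiag hij, hS, hA, hB, ?_⟩
  calc A * Bᵀ = U * padSqrt m r S * (Oᵀ * O) * (padSqrt n r S)ᵀ * Vᵀ := by
        rw [hA, hB]; simp only [transpose_mul, transpose_transpose, Matrix.mul_assoc]
    _ = U * padDiag m n r S * Vᵀ := by
        rw [hOO', Matrix.mul_one, Matrix.mul_assoc U, padSqrt_mul_padSqrt_transpose S hS]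
end

section
/- Let G be a real m×n matrix, λ > 0, and suppose A ∈ ℝ^{m×r}, B ∈ ℝ^{n×r} satisfy λA = GB and λB = GᵀA. Then AᵀA = BᵀB. -/
open Matrix

namespace Matrix

variable {R l m n : Type*} [CommSemiring R] [Fintype m] [Fintype n]

theorem smul_transpose_mul_self_eq_of_smul_eq_mul {c : R} {G : Matrix m n R}
    {A : Matrix m l R} {B : Matrix n l R} (hA : c • A = G * B) (hB : c • B = Gᵀ * A) :
    c • (Aᵀ * A) = c • (Bᵀ * B) :=
  calc c • (Aᵀ * A) = Aᵀ * (G * B) := by rw [← hA, Matrix.mul_smul]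
    _ = (Gᵀ * A)ᵀ * B := by rw [transpose_mul, transpose_transpose, Matrix.mul_assoc]
    _ = c • (Bᵀ * B) := by rw [← hB, transpose_smul, smul_mul]

end Matrix

/-- the stationarity conditions `λA = GB`, `λB = GᵀA` (λ > 0)
imply balancedness `AᵀA = BᵀB`. -/
theorem balanced_of_stationary {m n r : ℕ}
    (G : Matrix (Fin m) (Fin n) ℝ) (lam : ℝ) (hlam : 0 < lam)
    (A : Matrix (Fin m) (Fin r) ℝ) (B : Matrix (Fin n) (Fin r) ℝ)
    (hA : lam • A = G * B) (hB : lam • B = Gᵀ * A) :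
    Aᵀ * A = Bᵀ * B :=
  smul_right_injective _ hlam.ne' (smul_transpose_mul_self_eq_of_smul_eq_mul hA hB)
end
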